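/- arXiv:2007.03845 — 10 statements merged into one kernel-verified Lean document; each statement's English description precedes it below -/
import Mathlib

section
/- Let K be a field, G a group, and V a K-linear representation of G. Assume that V is semisimple as a module over the group algebra K[G]. Then the composition of the inclusion of the invariant subspace V^G into V with the canonical quotient map from V onto the coinvariants V_G is a K-linear isomorphism from V^G onto V_G. -/
/-- For a representation `ρ` of a group on a `K`-vector space `V`, the type synonym
`ρ.asModule` (which is `V` as a module over the group algebra) is an additive group. -/
instance repAsModuleAddCommGroup {K G V : Type*} [CommSemiring K] [Monoid G]
    [AddCommGroup V] [Module K V] (ρ : Representation K G V) :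
    AddCommGroup ρ.asModule := inferInstanceAs (AddCommGroup V)

/-!
Let `N` be the span of the vectors `ρ g v - v`. A `G`-stable complement `D` of `V^G` contains
all of them, since writing `v = i + d` gives `ρ g v - v = ρ g d - d`; so `V^G ⊓ N = ⊥`.
A `G`-stable complement `C` of `N` satisfies `ρ g c - c ∈ N ⊓ C = ⊥`, so `C ≤ V^G` and
`V^G ⊔ N = ⊤`. Hence `V^G` is a complement of `N`, and `V^G → V ⧸ N` is an isomorphism.
-/

lemma Subrepresentation.isCompl_toSubmodule {k G V : Type*} [Semiring k] [Monoid G]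
    [AddCommMonoid V] [Module k V] {ρ : Representation k G V} {σ τ : Subrepresentation ρ}
    (h : IsCompl σ τ) : IsCompl σ.toSubmodule τ.toSubmodule :=
  ⟨disjoint_iff.mpr (congrArg Subrepresentation.toSubmodule h.inf_eq_bot),
    codisjoint_iff.mpr (congrArg Subrepresentation.toSubmodule h.sup_eq_top)⟩

namespace Representation

section CommRing

variable {k G V : Type*} [CommRing k] [Group G] [AddCommGroup V] [Module k V]
  (ρ : Representation k G V)

noncomputable def invariantsSubrepresentation : Subrepresentation ρ where
  toSubmodule := invariants ρ
  apply_mem_toSubmodule g v hv := by rwa [hv g]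

def Coinvariants.kerSubrepresentation : Subrepresentation ρ where
  toSubmodule := Coinvariants.ker ρ
  apply_mem_toSubmodule g v hv := by
    induction hv using Submodule.span_induction with
    | mem x hx =>
      obtain ⟨⟨h, w⟩, rfl⟩ := hx
      have hsplit : ρ g (ρ h w - w) = (ρ (g * h) w - w) - (ρ g w - w) := by
        simp [map_mul]
      rw [hsplit]
      exact sub_mem (Coinvariants.sub_mem_ker _ _) (Coinvariants.sub_mem_ker _ _)
    | zero => simp
    | add x y _ _ hx hy => rw [map_add]; exact add_mem hx hy
    | smul c x _ hx => rw [map_smul]; exact Submodule.smul_mem _ c hx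

variable {ρ}

lemma Coinvariants.ker_le_of_invariants_sup_eq_top (D : Subrepresentation ρ)
    (hD : invariants ρ ⊔ D.toSubmodule = ⊤) : Coinvariants.ker ρ ≤ D.toSubmodule := by
  refine Submodule.span_le.mpr ?_
  rintro _ ⟨⟨g, v⟩, rfl⟩
  obtain ⟨i, hi, d, hd, rfl⟩ := Submodule.mem_sup.mp (hD ▸ Submodule.mem_top (x := v))
  have hcancel : ρ g (i + d) - (i + d) = ρ g d - d := by rw [map_add, hi g]; abel
  show ρ g (i + d) - (i + d) ∈ D.toSubmodule
  rw [hcancel]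
  exact sub_mem (D.apply_mem_toSubmodule g hd) hd

lemma le_invariants_of_disjoint_coinvariantsKer (C : Subrepresentation ρ)
    (hC : Disjoint (Coinvariants.ker ρ) C.toSubmodule) : C.toSubmodule ≤ invariants ρ := by
  intro c hc g
  have hfix : ρ g c - c = 0 := Submodule.disjoint_def.mp hC _
    (Coinvariants.sub_mem_ker g c) (sub_mem (C.apply_mem_toSubmodule g hc) hc)
  exact sub_eq_zero.mp hfix

end CommRing

theorem isCompl_invariants_coinvariantsKer {k G V : Type*} [Field k] [Group G] [AddCommGroup V]
    [Module k V] (ρ : Representation k G V) [IsSemisimpleRepresentation ρ] :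
    IsCompl (invariants ρ) (Coinvariants.ker ρ) := by
  obtain ⟨D, hD⟩ := exists_isCompl (invariantsSubrepresentation ρ)
  obtain ⟨C, hC⟩ := exists_isCompl (Coinvariants.kerSubrepresentation ρ)
  replace hD := Subrepresentation.isCompl_toSubmodule hD
  replace hC := Subrepresentation.isCompl_toSubmodule hC
  refine ⟨hD.disjoint.mono_right (Coinvariants.ker_le_of_invariants_sup_eq_top D hD.sup_eq_top),
    codisjoint_iff.mpr (eq_top_iff.mpr ?_)⟩
  calc ⊤ = Coinvariants.ker ρ ⊔ C.toSubmodule := hC.sup_eq_top.symm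
    _ ≤ Coinvariants.ker ρ ⊔ invariants ρ :=
      sup_le_sup_left (le_invariants_of_disjoint_coinvariantsKer C hC.disjoint) _
    _ = invariants ρ ⊔ Coinvariants.ker ρ := sup_comm _ _

end Representation

/-- if `V` is a `K`-linear representation of a group `G` which is semisimple
as a module over the group algebra `K[G]`, then the composition of the inclusion
`V^G → V` with the quotient map `V → V_G` onto the coinvariants (the quotient of `V`
by the span of the elements `g • v - v`) is a `K`-linear isomorphism. -/
theorem stmt0 {K : Type*} [Field K] {G : Type*} [Group G]
    {V : Type*} [AddCommGroup V] [Module K V] (ρ : Representation K G V)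
    (hss : IsSemisimpleModule (MonoidAlgebra K G) ρ.asModule) :
    Function.Bijective
      ((Submodule.span K {x : V | ∃ (g : G) (v : V), ρ g v - v = x}).mkQ ∘ₗ
        ρ.invariants.subtype) := by
  have : ρ.IsSemisimpleRepresentation :=
    (ρ.isSemisimpleRepresentation_iff_isSemisimpleModule_asModule).mpr hss
  have hker : Submodule.span K {x : V | ∃ (g : G) (v : V), ρ g v - v = x} =
      Representation.Coinvariants.ker ρ := by
    simp only [Representation.Coinvariants.ker, Set.range, Prod.exists]
  rw [hker, ← Submodule.toLinearMap_symm_quotientEquivOfIsCompl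
    ρ.isCompl_invariants_coinvariantsKer.symm]
  exact LinearEquiv.bijective _
end

section
/- Let K be a field, let G and H be groups acting K-linearly on a K-vector space V with commuting actions (equivalently, V is a representation of G × H). Assume V is semisimple as a K[G]-module, as a K[H]-module, and as a K[G×H]-module. Then: (1) the composition of the inclusion V^{G×H} ⊆ V^G with the quotient map V^G → (V^G)_H is a K-linear isomorphism onto (V^G)_H; and (2) the composition of the inclusion V^{G×H} ⊆ V with the quotient map V → V_H is injective with image exactly the G-invariants (V_H)^G of the coinvariant space V_H (on which G acts naturally). -/
section Defs

variable {K G H V : Type*} [Field K] [Group G] [Group H]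
  [AddCommGroup V] [Module K V]

/-- Two commuting representations of `G` and of `H` on `V` assemble into a representation
of `G × H` on `V`. -/
@[simps]
def prodRep (ρ : Representation K G V) (τ : Representation K H V)
    (hcomm : ∀ (g : G) (h : H), ρ g ∘ₗ τ h = τ h ∘ₗ ρ g) :
    Representation K (G × H) V where
  toFun p := ρ p.1 ∘ₗ τ p.2
  map_one' := by
    ext v
    simp
  map_mul' p q := by
    ext v
    have hc := LinearMap.congr_fun (hcomm q.1 p.2) (τ q.2 v)
    simp only [LinearMap.comp_apply] at hc
    simp only [Prod.fst_mul, Prod.snd_mul, map_mul, Module.End.mul_apply,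
      LinearMap.comp_apply]
    rw [hc]

/-- `V^{G×H}` is contained in `V^G`. -/
lemma prodRep_invariants_le (ρ : Representation K G V) (τ : Representation K H V)
    (hcomm : ∀ (g : G) (h : H), ρ g ∘ₗ τ h = τ h ∘ₗ ρ g) :
    (prodRep ρ τ hcomm).invariants ≤ ρ.invariants := by
  intro v hv
  rw [Representation.mem_invariants] at hv ⊢
  intro g
  have h := hv (g, 1)
  simpa using h

/-- The natural action of `H` on the invariant subspace `V^G`, for commuting actions of
`G` and `H` on `V`. -/
noncomputable def resInvRep (ρ : Representation K G V) (τ : Representation K H V)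
    (hcomm : ∀ (g : G) (h : H), ρ g ∘ₗ τ h = τ h ∘ₗ ρ g) :
    Representation K H ρ.invariants where
  toFun h := LinearMap.restrict (τ h) (p := ρ.invariants) (q := ρ.invariants)
    (fun v hv => by
      rw [Representation.mem_invariants] at hv ⊢
      intro g
      have hc := LinearMap.congr_fun (hcomm g h) v
      simp only [LinearMap.comp_apply] at hc
      rw [hc, hv g])
  map_one' := by
    ext v
    simp [LinearMap.restrict_coe_apply]
  map_mul' h h' := by
    ext v
    simp [LinearMap.restrict_coe_apply]

/-- The span whose quotient defines the coinvariants `V_H`. -/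
def coinvSpan (K : Type*) {H V : Type*} [Field K] [Group H]
    [AddCommGroup V] [Module K V] (τ : Representation K H V) : Submodule K V :=
  Submodule.span K {x : V | ∃ (h : H) (v : V), τ h v - v = x}

end Defs

section QuotRep

variable {K G H V : Type*} [Field K] [Group G] [Group H]
  [AddCommGroup V] [Module K V]

lemma coinvSpan_le_comap (ρ : Representation K G V) (τ : Representation K H V)
    (hcomm : ∀ (g : G) (h : H), ρ g ∘ₗ τ h = τ h ∘ₗ ρ g) (g : G) :
    coinvSpan K τ ≤ (coinvSpan K τ).comap (ρ g) := by
  rw [coinvSpan, Submodule.span_le]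
  rintro x ⟨h, v, rfl⟩
  have hc := LinearMap.congr_fun (hcomm g h) v
  simp only [LinearMap.comp_apply] at hc
  simp only [SetLike.mem_coe, Submodule.mem_comap, map_sub, hc]
  exact Submodule.subset_span ⟨h, ρ g v, rfl⟩

/-- The natural action of `G` on the coinvariant space `V_H`, for commuting actions of
`G` and `H` on `V`. -/
noncomputable def quotRep (ρ : Representation K G V) (τ : Representation K H V)
    (hcomm : ∀ (g : G) (h : H), ρ g ∘ₗ τ h = τ h ∘ₗ ρ g) :
    Representation K G (V ⧸ coinvSpan K τ) where
  toFun g := Submodule.mapQ _ _ (ρ g) (coinvSpan_le_comap ρ τ hcomm g)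
  map_one' := by
    apply Submodule.linearMap_qext
    ext v
    simp [Submodule.mapQ_apply]
  map_mul' g g' := by
    apply Submodule.linearMap_qext
    ext v
    simp [Submodule.mapQ_apply]

end QuotRep

/-! If `τ` is semisimple, then `V = V^H ⊕ I_H V`, where `I_H V` is spanned by the `τ h v - v`.
A subrepresentation `D` complementing `I_H V` is fixed pointwise, as `τ h d - d ∈ D ⊓ I_H V = 0`.
Conversely `I_H V` lies in every subrepresentation `E` with `V^H + E = V`, because
`τ h (w + e) - (w + e) = τ h e - e`; taking for `E` a complement of `V^H ⊓ I_H V` forces this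
intersection to vanish. So `V^H → V_H` is an isomorphism. For `V` itself it is `G`-equivariant
and `V^{G×H} = (V^H)^G`, which gives the second claim; for the subrepresentation `V^G`, again
semisimple and with `H`-invariants `V^{G×H}`, it gives the first. -/

open scoped MonoidAlgebra
open Representation

namespace Subrepresentation

section CommSemiring

variable {k G V : Type*} [CommSemiring k] [Monoid G] [AddCommMonoid V] [Module k V]
  {ρ : Representation k G V}

theorem isCompl_toSubmodule_s1 {σ σ' : Subrepresentation ρ} (h : IsCompl σ σ') :
    IsCompl σ.toSubmodule σ'.toSubmodule :=
  ⟨disjoint_iff.2 (congrArg toSubmodule (disjoint_iff.1 h.1)),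
    codisjoint_iff.2 (congrArg toSubmodule (codisjoint_iff.1 h.2))⟩

theorem coe_toRepresentation_asAlgebraHom (σ : Subrepresentation ρ) (a : k[G])
    (x : σ.toSubmodule) :
    (σ.toRepresentation.asAlgebraHom a x : V) = ρ.asAlgebraHom a x := by
  induction a using MonoidAlgebra.induction_linear with
  | zero => simp
  | add a b ha hb => simp [ha, hb]
  | single g t => simp [asAlgebraHom_single, toRepresentation]

noncomputable def asModuleEquiv (σ : Subrepresentation ρ) :
    σ.toRepresentation.asModule ≃ₗ[k[G]] σ.asSubmodule where
  toFun x := ⟨x.1, x.2⟩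
  invFun y := ⟨y.1, y.2⟩
  map_add' _ _ := rfl
  map_smul' a x := Subtype.ext (σ.coe_toRepresentation_asAlgebraHom a x)

end CommSemiring

variable {k G V : Type*} [Field k] [Group G] [AddCommGroup V] [Module k V]
  {ρ : Representation k G V}

theorem isSemisimpleRepresentation_toRepresentation [IsSemisimpleRepresentation ρ]
    (σ : Subrepresentation ρ) : IsSemisimpleRepresentation σ.toRepresentation := by
  have : IsSemisimpleModule k[G] ρ.asModule :=
    (isSemisimpleRepresentation_iff_isSemisimpleModule_asModule ρ).1 ‹_›
  exact (isSemisimpleRepresentation_iff_isSemisimpleModule_asModule _).2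
    (IsSemisimpleModule.congr σ.asModuleEquiv)

variable (ρ) in
noncomputable def invariants : Subrepresentation ρ where
  toSubmodule := ρ.invariants
  apply_mem_toSubmodule g v hv h := by rw [hv, hv]

variable (ρ) in
def coinvariantsKer : Subrepresentation ρ where
  toSubmodule := Coinvariants.ker ρ
  apply_mem_toSubmodule g := by
    show Coinvariants.ker ρ ≤ (Coinvariants.ker ρ).comap (ρ g)
    refine Submodule.span_le.2 ?_
    rintro _ ⟨⟨h, v⟩, rfl⟩
    exact Coinvariants.mem_ker_of_eq (g * h * g⁻¹) (ρ g v) _ (by simp)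

end Subrepresentation

namespace Representation

variable {k G V : Type*} [Field k] [Group G] [AddCommGroup V] [Module k V]
  {ρ : Representation k G V}

theorem le_invariants_of_disjoint_coinvariantsKer_s1 (σ : Subrepresentation ρ)
    (h : Disjoint σ.toSubmodule (Coinvariants.ker ρ)) : σ.toSubmodule ≤ ρ.invariants :=
  fun v hv g => sub_eq_zero.1 <| Submodule.disjoint_def.1 h _
    (sub_mem (σ.apply_mem_toSubmodule g hv) hv) (Coinvariants.sub_mem_ker g v)

theorem coinvariantsKer_le_of_codisjoint (σ : Subrepresentation ρ)
    (h : Codisjoint ρ.invariants σ.toSubmodule) : Coinvariants.ker ρ ≤ σ.toSubmodule := by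
  rw [Coinvariants.ker, Submodule.span_le]
  rintro _ ⟨⟨g, v⟩, rfl⟩
  obtain ⟨w, s, hw, hs, rfl⟩ := Submodule.codisjoint_iff_exists_add_eq.1 h v
  have hgw : ρ g w = w := hw g
  simpa [hgw] using sub_mem (σ.apply_mem_toSubmodule g hs) hs

variable (ρ) in
theorem isCompl_invariants_coinvariantsKer_s1 [IsSemisimpleRepresentation ρ] :
    IsCompl ρ.invariants (Coinvariants.ker ρ) := by
  constructor
  · obtain ⟨E, hE⟩ := exists_isCompl (Subrepresentation.invariants ρ ⊓ .coinvariantsKer ρ)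
    have hE' := Subrepresentation.isCompl_toSubmodule_s1 hE
    have hker : Coinvariants.ker ρ ≤ E.toSubmodule :=
      coinvariantsKer_le_of_codisjoint E (hE'.codisjoint.mono_left inf_le_left)
    exact disjoint_iff.2 (disjoint_self.1 (hE'.disjoint.mono_right (inf_le_right.trans hker)))
  · obtain ⟨D, hD⟩ := exists_isCompl (Subrepresentation.coinvariantsKer ρ)
    have hD' := Subrepresentation.isCompl_toSubmodule_s1 hD
    exact (hD'.codisjoint.mono_right
      (le_invariants_of_disjoint_coinvariantsKer_s1 D hD'.disjoint.symm)).symm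

end Representation

theorem Submodule.bijective_mkQ_comp_of_isCompl {R M N : Type*} [Ring R] [AddCommGroup M]
    [Module R M] [AddCommGroup N] [Module R N] {p q : Submodule R M} {f : N →ₗ[R] M}
    (hf : Function.Injective f) (hp : LinearMap.range f = p) (h : IsCompl p q) :
    Function.Bijective (q.mkQ ∘ₗ f) := by
  subst hp
  exact (quotientEquivOfIsCompl q _ h.symm).symm.bijective.comp
    (LinearEquiv.ofInjective f hf).bijective

section Commuting

variable {K G H V : Type*} [Field K] [Group G] [Group H] [AddCommGroup V] [Module K V]
  {ρ : Representation K G V} {τ : Representation K H V}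

theorem coinvSpan_eq_coinvariantsKer (τ : Representation K H V) :
    coinvSpan K τ = Coinvariants.ker τ := by
  simp only [coinvSpan, Coinvariants.ker, Set.range, Prod.exists]

theorem isCompl_invariants_coinvSpan (τ : Representation K H V) [IsSemisimpleRepresentation τ] :
    IsCompl τ.invariants (coinvSpan K τ) :=
  coinvSpan_eq_coinvariantsKer τ ▸ isCompl_invariants_coinvariantsKer_s1 τ

theorem bijective_mkQ_comp_subtype_invariants (τ : Representation K H V)
    [IsSemisimpleRepresentation τ] :
    Function.Bijective ((coinvSpan K τ).mkQ ∘ₗ τ.invariants.subtype) :=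
  Submodule.bijective_mkQ_comp_of_isCompl τ.invariants.injective_subtype
    τ.invariants.range_subtype (isCompl_invariants_coinvSpan τ)

theorem apply_mem_invariants_of_commute (hcomm : ∀ (g : G) (h : H), ρ g ∘ₗ τ h = τ h ∘ₗ ρ g)
    (h : H) {v : V} (hv : v ∈ ρ.invariants) : τ h v ∈ ρ.invariants := fun g => by
  rw [← LinearMap.comp_apply, hcomm, LinearMap.comp_apply, hv g]

theorem mem_prodRep_invariants {hcomm : ∀ (g : G) (h : H), ρ g ∘ₗ τ h = τ h ∘ₗ ρ g} {v : V} :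
    v ∈ (prodRep ρ τ hcomm).invariants ↔ v ∈ ρ.invariants ∧ v ∈ τ.invariants := by
  refine ⟨fun hv => ⟨fun g => by simpa using hv (g, 1), fun h => by simpa using hv (1, h)⟩, ?_⟩
  rintro ⟨hρ, hτ⟩ ⟨g, h⟩
  simp [hρ g, hτ h]

variable (ρ τ) in
noncomputable def invariantsSubrepresentation
    (hcomm : ∀ (g : G) (h : H), ρ g ∘ₗ τ h = τ h ∘ₗ ρ g) : Subrepresentation τ where
  toSubmodule := ρ.invariants
  apply_mem_toSubmodule h _ := apply_mem_invariants_of_commute hcomm h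

theorem isSemisimpleRepresentation_resInvRep [IsSemisimpleRepresentation τ]
    (hcomm : ∀ (g : G) (h : H), ρ g ∘ₗ τ h = τ h ∘ₗ ρ g) :
    IsSemisimpleRepresentation (resInvRep ρ τ hcomm) :=
  (invariantsSubrepresentation ρ τ hcomm).isSemisimpleRepresentation_toRepresentation

theorem range_inclusion_prodRep_invariants
    (hcomm : ∀ (g : G) (h : H), ρ g ∘ₗ τ h = τ h ∘ₗ ρ g) :
    LinearMap.range (Submodule.inclusion (prodRep_invariants_le ρ τ hcomm)) =
      (resInvRep ρ τ hcomm).invariants := by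
  ext w
  rw [Submodule.range_inclusion, Submodule.mem_comap, Submodule.subtype_apply,
    mem_prodRep_invariants]
  exact ⟨fun hw h => Subtype.ext (hw.2 h), fun hw => ⟨w.2, fun h => congrArg Subtype.val (hw h)⟩⟩

theorem range_mkQ_comp_subtype_prodRep_invariants
    (hcomm : ∀ (g : G) (h : H), ρ g ∘ₗ τ h = τ h ∘ₗ ρ g)
    (hτ : Function.Bijective ((coinvSpan K τ).mkQ ∘ₗ τ.invariants.subtype)) :
    LinearMap.range ((coinvSpan K τ).mkQ ∘ₗ (prodRep ρ τ hcomm).invariants.subtype) =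
      (quotRep ρ τ hcomm).invariants := by
  ext x
  constructor
  · rintro ⟨v, rfl⟩ g
    exact congrArg (coinvSpan K τ).mkQ ((mem_prodRep_invariants.1 v.2).1 g)
  · intro hx
    obtain ⟨⟨w, hw⟩, rfl⟩ := hτ.2 x
    refine ⟨⟨w, mem_prodRep_invariants.2 ⟨fun g => ?_, hw⟩⟩, rfl⟩
    have hgw : ρ g w ∈ τ.invariants :=
      apply_mem_invariants_of_commute (fun h g => (hcomm g h).symm) g hw
    exact congrArg Subtype.val (hτ.1 (a₁ := ⟨ρ g w, hgw⟩) (hx g))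

end Commuting

theorem stmt1_general {K : Type*} [Field K] {G H : Type*} [Group G] [Group H]
    {V : Type*} [AddCommGroup V] [Module K V]
    (ρ : Representation K G V) (τ : Representation K H V)
    (hcomm : ∀ (g : G) (h : H), ρ g ∘ₗ τ h = τ h ∘ₗ ρ g)
    (hH : IsSemisimpleModule (MonoidAlgebra K H) τ.asModule) :
    Function.Bijective
      ((Submodule.span K {x : ρ.invariants | ∃ (h : H) (v : ρ.invariants),
          resInvRep ρ τ hcomm h v - v = x}).mkQ ∘ₗ
        Submodule.inclusion (prodRep_invariants_le ρ τ hcomm)) ∧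
    Function.Injective ((coinvSpan K τ).mkQ ∘ₗ (prodRep ρ τ hcomm).invariants.subtype) ∧
    LinearMap.range ((coinvSpan K τ).mkQ ∘ₗ (prodRep ρ τ hcomm).invariants.subtype) =
      (quotRep ρ τ hcomm).invariants := by
  have : IsSemisimpleRepresentation τ :=
    (isSemisimpleRepresentation_iff_isSemisimpleModule_asModule τ).2 hH
  have : IsSemisimpleRepresentation (resInvRep ρ τ hcomm) :=
    isSemisimpleRepresentation_resInvRep hcomm
  have hτ := bijective_mkQ_comp_subtype_invariants τ
  refine ⟨?_, ?_, range_mkQ_comp_subtype_prodRep_invariants hcomm hτ⟩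
  · exact Submodule.bijective_mkQ_comp_of_isCompl (Submodule.inclusion_injective _)
      (range_inclusion_prodRep_invariants hcomm) (isCompl_invariants_coinvSpan _)
  · exact hτ.1.comp (Submodule.inclusion_injective fun _ hv => (mem_prodRep_invariants.1 hv).2)

/-- for commuting semisimple actions of `G` and `H` on `V` with the product
action of `G × H` also semisimple: (1) the composition `V^{G×H} ⊆ V^G → (V^G)_H` is a
`K`-linear isomorphism, and (2) the composition `V^{G×H} ⊆ V → V_H` is injective with
image exactly the `G`-invariants `(V_H)^G`. -/
theorem stmt1 {K : Type*} [Field K] {G H : Type*} [Group G] [Group H]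
    {V : Type*} [AddCommGroup V] [Module K V]
    (ρ : Representation K G V) (τ : Representation K H V)
    (hcomm : ∀ (g : G) (h : H), ρ g ∘ₗ τ h = τ h ∘ₗ ρ g)
    (hG : IsSemisimpleModule (MonoidAlgebra K G) ρ.asModule)
    (hH : IsSemisimpleModule (MonoidAlgebra K H) τ.asModule)
    (hGH : IsSemisimpleModule (MonoidAlgebra K (G × H)) (prodRep ρ τ hcomm).asModule) :
    Function.Bijective
      ((Submodule.span K {x : ρ.invariants | ∃ (h : H) (v : ρ.invariants),
          resInvRep ρ τ hcomm h v - v = x}).mkQ ∘ₗ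
        Submodule.inclusion (prodRep_invariants_le ρ τ hcomm)) ∧
    Function.Injective ((coinvSpan K τ).mkQ ∘ₗ (prodRep ρ τ hcomm).invariants.subtype) ∧
    LinearMap.range ((coinvSpan K τ).mkQ ∘ₗ (prodRep ρ τ hcomm).invariants.subtype) =
      (quotRep ρ τ hcomm).invariants :=
  stmt1_general ρ τ hcomm hH
end

section
/- Let K be a field, V a finite-dimensional K-vector space of dimension d, and n a natural number with n ≥ d + 1. Let ι : S_{d+1} → S_n be the embedding that lets a permutation act on the first d+1 letters and fixes the remaining letters. Then Σ_{σ ∈ S_{d+1}} sgn(σ)·L_{ι(σ)}^{(n)} = 0 in End_K(V^{⊗n}). -/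
/-!
On a pure tensor `v₁ ⊗ ⋯ ⊗ vₙ`, freezing the last `n - (d + 1)` factors turns the sum into the
alternatization of a multilinear map in `d + 1` vector variables, evaluated at `(v₁, …, v_{d+1})`.
An alternating map vanishes on linearly dependent families, and `d + 1` vectors in a space of
dimension `d` are dependent.
-/

open scoped TensorProduct

/-- The endomorphism `L_σ^{(n)}` of the `n`-th tensor power of `V`, determined by
`v_1 ⊗ ⋯ ⊗ v_n ↦ v_{σ⁻¹(1)} ⊗ ⋯ ⊗ v_{σ⁻¹(n)}`. -/
noncomputable def permMap (K : Type*) [Field K] (V : Type*) [AddCommGroup V] [Module K V]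
    (n : ℕ) (σ : Equiv.Perm (Fin n)) :
    (⨂[K] _ : Fin n, V) →ₗ[K] ⨂[K] _ : Fin n, V :=
  (PiTensorProduct.reindex K (fun _ : Fin n => V) σ).toLinearMap

open Equiv

theorem Equiv.Perm.viaEmbedding_symm {α β : Type*} (σ : Perm α) (e : α ↪ β) :
    (σ.viaEmbedding e).symm = σ⁻¹.viaEmbedding e :=
  (map_inv (Perm.viaEmbeddingHom e) σ).symm

namespace MultilinearMap

variable {R M N ι κ : Type*} [CommRing R] [IsDomain R] [AddCommGroup M] [Module R M]
  [Module.Finite R M] [AddCommGroup N] [Module R N] [Module.IsTorsionFree R N]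
  [Fintype κ] [DecidableEq κ]

theorem sum_sign_smul_domDomCongr_viaEmbedding_eq_zero
    (f : MultilinearMap R (fun _ : ι => M) N) (e : κ ↪ ι)
    (hκ : Module.finrank R M < Fintype.card κ) :
    ∑ σ : Perm κ, ((Perm.sign σ : ℤ) : R) • f.domDomCongr (σ.viaEmbedding e) = 0 := by
  classical
  ext v
  let g := (f.domDomRestrict (· ∈ Set.range e) fun i => v i).domDomCongr
    (Equiv.ofInjective e e.injective).symm
  have hg (σ : Perm κ) : f.domDomCongr (σ.viaEmbedding e) v = g.domDomCongr σ (v ∘ e) := by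
    simp only [domDomCongr_apply, domDomRestrict_apply, g]
    congr 1
    ext i
    by_cases hi : i ∈ Set.range e
    · obtain ⟨k, rfl⟩ := hi
      simpa using congrArg v (Perm.viaEmbedding_apply σ e k)
    · simpa [hi] using congrArg v (Perm.viaEmbedding_apply_of_notMem σ e i hi)
  simp only [sum_apply, smul_apply, hg, zero_apply, Int.cast_smul_eq_zsmul, ← Units.smul_def]
  rw [← alternatization_apply]
  exact (alternatization g).map_linearDependent _ fun hli =>
    hκ.not_ge hli.fintype_card_le_finrank

end MultilinearMap

theorem permMap_compMultilinearMap_tprod (K : Type*) [Field K] (V : Type*) [AddCommGroup V]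
    [Module K V] (n : ℕ) (σ : Perm (Fin n)) :
    (permMap K V n σ).compMultilinearMap (PiTensorProduct.tprod K) =
      (PiTensorProduct.tprod K).domDomCongr σ.symm :=
  MultilinearMap.ext <| PiTensorProduct.reindex_tprod σ

/-- if `dim V = d` and `n ≥ d + 1`, then
`Σ_{σ ∈ S_{d+1}} sgn(σ) • L_{ι(σ)}^{(n)} = 0`, where `ι : S_{d+1} → S_n` acts on the
first `d + 1` letters and fixes the rest. -/
theorem stmt5 (K : Type*) [Field K] (V : Type*) [AddCommGroup V] [Module K V]
    [FiniteDimensional K V] (d n : ℕ) (hd : Module.finrank K V = d) (hn : d + 1 ≤ n) :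
    ∑ σ : Equiv.Perm (Fin (d + 1)),
      ((Equiv.Perm.sign σ : ℤ) : K) • permMap K V n (σ.viaEmbedding (Fin.castLEEmb hn)) = 0 := by
  apply PiTensorProduct.lift.symm.injective
  rw [← Equiv.sum_comp (Equiv.inv _), map_sum, map_zero]
  simp only [map_smul, PiTensorProduct.lift_symm, permMap_compMultilinearMap_tprod,
    Equiv.inv_apply, Perm.viaEmbedding_symm, inv_inv, Perm.sign_inv]
  exact MultilinearMap.sum_sign_smul_domDomCongr_viaEmbedding_eq_zero _ _ (by simp [hd])
end

section
/- Let K be an infinite field, W a nonzero finite-dimensional K-vector space, and p, q natural numbers with p ≠ q. If x : W^{⊗q} → W^{⊗p} is a K-linear map satisfying g^{⊗p} ∘ x = x ∘ g^{⊗q} for every invertible K-linear map g : W → W, then x = 0. -/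
open scoped TensorProduct

/-!
Only scalar automorphisms are needed: `g = c • id` acts on `W^{⊗n}` as `c ^ n`, so the
intertwining relation gives `c ^ p • x = c ^ q • x`, and an infinite field contains a
nonzero `c` with `c ^ p ≠ c ^ q`.
-/

theorem PiTensorProduct.map_smul_id {R ι M : Type*} [CommSemiring R] [Fintype ι]
    [AddCommMonoid M] [Module R M] (c : R) :
    PiTensorProduct.map (fun _ : ι => (c • LinearMap.id : M →ₗ[R] M)) =
      c ^ Fintype.card ι • LinearMap.id := by
  ext f
  simp [MultilinearMap.map_smul_univ, Finset.prod_const]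

open Polynomial in
theorem exists_ne_zero_pow_ne_pow {K : Type*} [CommRing K] [IsDomain K] [Infinite K]
    {p q : ℕ} (hpq : p ≠ q) : ∃ c : K, c ≠ 0 ∧ c ^ p ≠ c ^ q := by
  have hP : (X * (X ^ p - X ^ q) : K[X]) ≠ 0 := by
    refine mul_ne_zero X_ne_zero fun h => hpq ?_
    simpa using congrArg natDegree (sub_eq_zero.mp h)
  by_contra! h
  refine hP (Polynomial.funext fun c => ?_)
  by_cases hc : c = 0
  · simp [hc]
  · simp [h c hc]

theorem stmt6_general (K : Type*) [Field K] [Infinite K] (W : Type*) [AddCommGroup W] [Module K W]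
    (p q : ℕ) (hpq : p ≠ q)
    (x : (⨂[K] _ : Fin q, W) →ₗ[K] ⨂[K] _ : Fin p, W)
    (hx : ∀ g : W ≃ₗ[K] W,
      (PiTensorProduct.map fun _ : Fin p => g.toLinearMap) ∘ₗ x =
        x ∘ₗ (PiTensorProduct.map fun _ : Fin q => g.toLinearMap)) :
    x = 0 := by
  obtain ⟨c, hc0, hcpq⟩ := exists_ne_zero_pow_ne_pow (K := K) hpq
  have hscalar : (LinearEquiv.smulOfNeZero K W c hc0).toLinearMap = c • LinearMap.id := rfl
  have hsmul : c ^ p • x = c ^ q • x := by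
    simpa [hscalar, PiTensorProduct.map_smul_id, LinearMap.smul_comp, LinearMap.comp_smul]
      using hx (LinearEquiv.smulOfNeZero K W c hc0)
  by_contra hx0
  exact hcpq (smul_left_injective K hx0 hsmul)

/-- over an infinite field, a `K`-linear map `W^{⊗q} → W^{⊗p}` with `p ≠ q`
(`W` nonzero finite-dimensional) that intertwines `g^{⊗q}` and `g^{⊗p}` for every
invertible `g : W → W` must be zero. -/
theorem stmt6 (K : Type*) [Field K] [Infinite K] (W : Type*) [AddCommGroup W] [Module K W]
    [Nontrivial W] [FiniteDimensional K W] (p q : ℕ) (hpq : p ≠ q)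
    (x : (⨂[K] _ : Fin q, W) →ₗ[K] ⨂[K] _ : Fin p, W)
    (hx : ∀ g : W ≃ₗ[K] W,
      (PiTensorProduct.map fun _ : Fin p => g.toLinearMap) ∘ₗ x =
        x ∘ₗ (PiTensorProduct.map fun _ : Fin q => g.toLinearMap)) :
    x = 0 :=
  stmt6_general K W p q hpq x hx
end

section
/- Let K be a field, V a finite-dimensional K-vector space, T a K-linear endomorphism of V, and let σ ∈ S_n and τ ∈ S_m. Let Π(σ,τ) ∈ S_{n+m} be the permutation that acts as σ on the first n letters and as the shift of τ on the last m letters. Then Tr(L_{Π(σ,τ)}^{(n+m)} ∘ T^{⊗(n+m)}) = Tr(L_σ^{(n)} ∘ T^{⊗n}) · Tr(L_τ^{(m)} ∘ T^{⊗m}). -/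
/-!
Both sides are traces of endomorphisms of the form `L_σ ∘ T^{⊗ι}`, which make sense for any
index type `ι`. Relabelling `Fin n ⊕ Fin m ≃ Fin (n + m)` conjugates such an
endomorphism, and under `(⨂ ι) ⊗ (⨂ κ) ≃ ⨂ (ι ⊕ κ)` the endomorphism for `σ ⊕ τ` becomes the
tensor product of those for `σ` and `τ`. Trace is invariant under conjugation and
multiplicative on tensor products.
-/

open scoped TensorProduct

/-- The endomorphism `T^{⊗n}` of the `n`-th tensor power of `V` induced by `T : V →ₗ[K] V`. -/
noncomputable def tpowMap (K : Type*) [Field K] (V : Type*) [AddCommGroup V] [Module K V]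
    (n : ℕ) (T : V →ₗ[K] V) :
    (⨂[K] _ : Fin n, V) →ₗ[K] ⨂[K] _ : Fin n, V :=
  PiTensorProduct.map fun _ => T

namespace PiTensorProduct

variable {R : Type*} [CommSemiring R] {M : Type*} [AddCommMonoid M] [Module R M] {ι κ : Type*}

noncomputable def permTPow (σ : Equiv.Perm ι) (T : M →ₗ[R] M) :
    (⨂[R] _ : ι, M) →ₗ[R] ⨂[R] _ : ι, M :=
  (reindex R (fun _ => M) σ).toLinearMap ∘ₗ map fun _ => T

theorem permTPow_permCongr (e : ι ≃ κ) (σ : Equiv.Perm ι) (T : M →ₗ[R] M) :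
    permTPow (e.permCongr σ) T = (reindex R (fun _ => M) e).conj (permTPow σ T) := by
  ext v
  simp only [permTPow, LinearMap.compMultilinearMap_apply, LinearMap.coe_comp,
    LinearEquiv.coe_coe, Function.comp_apply, map_tprod, reindex_tprod, LinearEquiv.conj_apply,
    reindex_symm, Equiv.symm_symm]
  congr 1

theorem permTPow_sumCongr (σ : Equiv.Perm ι) (τ : Equiv.Perm κ) (T : M →ₗ[R] M) :
    permTPow (σ.sumCongr τ) T =
      (tmulEquiv R M).conj (TensorProduct.map (permTPow σ T) (permTPow τ T)) := by
  rw [LinearEquiv.conj_apply, LinearEquiv.eq_comp_toLinearMap_symm]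
  ext v w
  simp only [permTPow, LinearMap.compMultilinearMap_apply,
    TensorProduct.AlgebraTensorModule.curry_apply, LinearMap.restrictScalars_self,
    TensorProduct.curry_apply, LinearMap.coe_comp, LinearEquiv.coe_coe, Function.comp_apply,
    tmulEquiv_apply, map_tprod, reindex_tprod, Equiv.sumCongr_symm, Equiv.sumCongr_apply,
    TensorProduct.map_tmul]
  congr 1
  ext (i | i) <;> rfl

end PiTensorProduct

open PiTensorProduct in
/-- for the block embedding `Π : S_n × S_m → S_{n+m}` (acting as `σ` on the
first `n` letters and as the shift of `τ` on the last `m` letters),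
`Tr(L_{Π(σ,τ)}^{(n+m)} ∘ T^{⊗(n+m)}) = Tr(L_σ^{(n)} ∘ T^{⊗n}) · Tr(L_τ^{(m)} ∘ T^{⊗m})`. -/
theorem stmt9 (K : Type*) [Field K] (V : Type*) [AddCommGroup V] [Module K V]
    [FiniteDimensional K V] (T : V →ₗ[K] V) (n m : ℕ)
    (σ : Equiv.Perm (Fin n)) (τ : Equiv.Perm (Fin m)) :
    LinearMap.trace K (⨂[K] _ : Fin (n + m), V)
        (permMap K V (n + m) ((Equiv.permCongr finSumFinEquiv) (Equiv.sumCongr σ τ)) ∘ₗ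
          tpowMap K V (n + m) T) =
      LinearMap.trace K (⨂[K] _ : Fin n, V) (permMap K V n σ ∘ₗ tpowMap K V n T) *
        LinearMap.trace K (⨂[K] _ : Fin m, V) (permMap K V m τ ∘ₗ tpowMap K V m T) := by
  change LinearMap.trace K _ (permTPow (finSumFinEquiv.permCongr (σ.sumCongr τ)) T) =
    LinearMap.trace K _ (permTPow σ T) * LinearMap.trace K _ (permTPow τ T)
  rw [permTPow_permCongr, LinearMap.trace_conj', permTPow_sumCongr, LinearMap.trace_conj',
    LinearMap.trace_tensorProduct']
end

section
/- Let K be a field, V a finite-dimensional K-vector space, and P₁, P₂ K-linear endomorphisms of V with P₁ + P₂ = id_V, P₁ ∘ P₂ = 0, P₂ ∘ P₁ = 0, P₁² = P₁ and P₂² = P₂ (complementary projections). Let T be a K-linear endomorphism of V commuting with P₁. Let n ≥ 1, let σ ∈ S_n be an n-cycle (i.e. σ acts transitively on {1,…,n}), and let f : {1,…,n} → {1,2} be a non-constant function. Then Tr(L_σ^{(n)} ∘ T^{⊗n} ∘ (P_{f(1)} ⊗ P_{f(2)} ⊗ ⋯ ⊗ P_{f(n)})) = 0. -/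
open scoped TensorProduct

/-! With `Q = P_{f 1} ⊗ ⋯ ⊗ P_{f n}` idempotent, `Tr (L_σ T^{⊗n} Q) = Tr (Q L_σ T^{⊗n} Q)`.
Moving `Q` past `L_σ` turns it into `Q' = P_{f (σ 1)} ⊗ ⋯ ⊗ P_{f (σ n)}`, which commutes with
`T^{⊗n}`. As `σ` is transitive and `f` is not constant, `f (σ j) ≠ f j` for some `j`, so the
factors of `Q'` and `Q` in slot `j` are complementary projections and `Q' Q = 0`. -/

theorem Equiv.Perm.exists_apply_ne_of_forall_exists_pow_apply_eq {α β : Type*} {σ : Perm α}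
    (hσ : ∀ i j, ∃ k : ℕ, (σ ^ k) i = j) {f : α → β} (hf : ∃ i j, f i ≠ f j) :
    ∃ j, f (σ j) ≠ f j := by
  by_contra! h
  obtain ⟨i, j, hij⟩ := hf
  obtain ⟨k, rfl⟩ := hσ i j
  have hsc : Function.Semiconj f σ id := h
  exact hij (by simpa [Equiv.Perm.coe_pow] using (hsc.iterate_right k i).symm)

namespace PiTensorProduct

variable {R ι : Type*} [CommSemiring R] {s t : ι → Type*} [∀ i, AddCommMonoid (s i)]
  [∀ i, Module R (s i)] [∀ i, AddCommMonoid (t i)] [∀ i, Module R (t i)]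

theorem map_eq_zero_of_eq_zero {f : Π i, s i →ₗ[R] t i} {j : ι} (hj : f j = 0) :
    map f = 0 := by
  ext x
  rw [LinearMap.compMultilinearMap_apply, map_tprod, LinearMap.compMultilinearMap_apply,
    LinearMap.zero_apply]
  exact (tprod R).map_coord_zero j (by simp [hj])

theorem commute_map {f g : Π i, s i →ₗ[R] s i} (h : ∀ i, Commute (f i) (g i)) :
    Commute (map f) (map g) :=
  (Pi.commute_iff.mpr h).map (mapMonoidHom (R := R) (s := s))

end PiTensorProduct

theorem LinearMap.trace_mul_eq_zero_of_isIdempotentElem {R M : Type*} [CommRing R]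
    [AddCommGroup M] [Module R M] [Module.Free R M] [Module.Finite R M] {A Q : M →ₗ[R] M}
    (hQ : IsIdempotentElem Q) (h : Q * A * Q = 0) : trace R M (A * Q) = 0 := by
  rw [← hQ.eq, ← mul_assoc, trace_mul_comm, ← mul_assoc, h, map_zero]

open PiTensorProduct in
theorem trace_reindex_comp_map_comp_map_eq_zero {K V ι κ : Type*} [Field K] [AddCommGroup V]
    [Module K V] [FiniteDimensional K V] [Finite ι] {P : κ → Module.End K V}
    (hP : OrthogonalIdempotents P) {T : Module.End K V} (hT : ∀ c, Commute T (P c))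
    (σ : Equiv.Perm ι) {f : ι → κ} {j : ι} (hj : f (σ j) ≠ f j) :
    LinearMap.trace K (⨂[K] _ : ι, V)
      ((reindex K (fun _ => V) σ).toLinearMap ∘ₗ map (fun _ => T) ∘ₗ map fun i => P (f i)) =
        0 := by
  set L := (reindex K (fun _ => V) σ).toLinearMap
  set Tn := map fun (_ : ι) => T
  set Q := map fun i => P (f i)
  set Q' := map fun i => P (f (σ i))
  have hQ : IsIdempotentElem Q := by
    rw [IsIdempotentElem, ← PiTensorProduct.map_mul]
    exact congrArg map (funext fun i => (hP.idem (f i)).eq)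
  have hQL : Q * L = L * Q' := by
    simpa [Module.End.mul_eq_comp] using map_comp_reindex_eq (fun i => P (f (σ i))) σ
  have hTnQ' : Commute Tn Q' := commute_map fun i => hT (f (σ i))
  have hQ'Q : Q' * Q = 0 := by
    rw [← PiTensorProduct.map_mul]
    exact map_eq_zero_of_eq_zero (hP.ortho hj)
  show LinearMap.trace K _ (L * Tn * Q) = 0
  refine LinearMap.trace_mul_eq_zero_of_isIdempotentElem hQ ?_
  calc Q * (L * Tn) * Q = L * (Q' * Tn) * Q := by rw [← mul_assoc Q, hQL, mul_assoc L]
    _ = L * Tn * (Q' * Q) := by rw [← hTnQ'.eq]; simp only [mul_assoc]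
    _ = 0 := by rw [hQ'Q, mul_zero]

theorem stmt10_general (K : Type*) [Field K] (V : Type*) [AddCommGroup V] [Module K V]
    [FiniteDimensional K V] (P : Fin 2 → (V →ₗ[K] V))
    (hsum : P 0 + P 1 = LinearMap.id)
    (hP0 : P 0 ∘ₗ P 0 = P 0)
    (T : V →ₗ[K] V) (hT : T ∘ₗ P 0 = P 0 ∘ₗ T)
    (n : ℕ) (σ : Equiv.Perm (Fin n))
    (hσ : ∀ i j : Fin n, ∃ k : ℕ, (σ ^ k) i = j)
    (f : Fin n → Fin 2) (hf : ∃ i j : Fin n, f i ≠ f j) :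
    LinearMap.trace K (⨂[K] _ : Fin n, V)
      (permMap K V n σ ∘ₗ tpowMap K V n T ∘ₗ PiTensorProduct.map fun i => P (f i)) = 0 := by
  have hP1 : P 1 = 1 - P 0 := eq_sub_of_add_eq' hsum
  have hP : CompleteOrthogonalIdempotents P := by
    have hP_eq : P = ![P 0, 1 - P 0] := by
      funext i
      fin_cases i <;> simp [hP1]
    exact hP_eq ▸ CompleteOrthogonalIdempotents.of_isIdempotentElem hP0
  have hTP : ∀ c, Commute T (P c) :=
    Fin.forall_fin_two.mpr ⟨hT, hP1 ▸ (Commute.one_right T).sub_right hT⟩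
  obtain ⟨j, hj⟩ := Equiv.Perm.exists_apply_ne_of_forall_exists_pow_apply_eq hσ hf
  exact trace_reindex_comp_map_comp_map_eq_zero hP.toOrthogonalIdempotents hTP σ hj

/-- for complementary projections `P 0, P 1` of `V`, an endomorphism `T`
commuting with `P 0`, an `n`-cycle `σ` (i.e. `σ` acts transitively on `{1,…,n}`, `n ≥ 1`)
and a non-constant function `f : {1,…,n} → {0,1}`, the trace of
`L_σ^{(n)} ∘ T^{⊗n} ∘ (P (f 1) ⊗ ⋯ ⊗ P (f n))` vanishes. -/
theorem stmt10 (K : Type*) [Field K] (V : Type*) [AddCommGroup V] [Module K V]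
    [FiniteDimensional K V] (P : Fin 2 → (V →ₗ[K] V))
    (hsum : P 0 + P 1 = LinearMap.id)
    (h01 : P 0 ∘ₗ P 1 = 0) (h10 : P 1 ∘ₗ P 0 = 0)
    (hP0 : P 0 ∘ₗ P 0 = P 0) (hP1 : P 1 ∘ₗ P 1 = P 1)
    (T : V →ₗ[K] V) (hT : T ∘ₗ P 0 = P 0 ∘ₗ T)
    (n : ℕ) (hn : 1 ≤ n) (σ : Equiv.Perm (Fin n))
    (hσ : ∀ i j : Fin n, ∃ k : ℕ, (σ ^ k) i = j)
    (f : Fin n → Fin 2) (hf : ∃ i j : Fin n, f i ≠ f j) :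
    LinearMap.trace K (⨂[K] _ : Fin n, V)
      (permMap K V n σ ∘ₗ tpowMap K V n T ∘ₗ PiTensorProduct.map fun i => P (f i)) = 0 :=
  stmt10_general K V P hsum hP0 T hT n σ hσ f hf
end

section
/- Let K be a field, V a finite-dimensional K-vector space, and P₁, P₂ complementary projections of V (P₁ + P₂ = id_V, P₁ ∘ P₂ = P₂ ∘ P₁ = 0, P₁² = P₁, P₂² = P₂). Let T be a K-linear endomorphism of V commuting with P₁, let n ≥ 1, and let σ ∈ S_n be an n-cycle. Then Tr(L_σ^{(n)} ∘ T^{⊗n}) = Tr(L_σ^{(n)} ∘ (T∘P₁)^{⊗n}) + Tr(L_σ^{(n)} ∘ (T∘P₂)^{⊗n}). -/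
/-!
Write `T = T P₀ + T P₁` and expand `T^{⊗n}` multilinearly into a sum, over colourings
`f : Fin n → Fin 2`, of `⊗ᵢ T P_{f i}`. Since `⊗ A ∘ L_σ = L_σ ∘ ⊗ (A ∘ σ)`, the square of
`L_σ ∘ ⊗ A` is `L_σ² ∘ ⊗ᵢ (A (σ i) ∘ A i)`. For a non-constant colouring, transitivity of `σ`
gives an `i` with `f (σ i) ≠ f i`, and then `T P_{f (σ i)} ∘ T P_{f i} = 0` because `T`
commutes with the complementary projections. So that term is nilpotent and has trace zero,
and only the two constant colourings survive.
-/

open scoped TensorProduct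

namespace PiTensorProduct

variable {R : Type*} [CommRing R] {ι : Type*} {M : Type*} [AddCommGroup M] [Module R M]

theorem map_comp_reindex_self (A : ι → M →ₗ[R] M) (σ : Equiv.Perm ι) :
    map A ∘ₗ (reindex R (fun _ ↦ M) σ).toLinearMap =
      (reindex R (fun _ ↦ M) σ).toLinearMap ∘ₗ map (fun i ↦ A (σ i)) := by
  simpa using map_comp_reindex_eq (fun i ↦ A (σ i)) σ

theorem map_eq_zero_of_apply_eq_zero [DecidableEq ι] {s t : ι → Type*}
    [∀ i, AddCommGroup (s i)] [∀ i, Module R (s i)] [∀ i, AddCommGroup (t i)]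
    [∀ i, Module R (t i)] {A : ∀ i, s i →ₗ[R] t i} {i : ι} (h : A i = 0) :
    map A = 0 :=
  (mapMultilinear R s t).map_coord_zero i h

theorem isNilpotent_reindex_comp_map {A : ι → M →ₗ[R] M} {σ : Equiv.Perm ι} {i : ι}
    (h : A (σ i) ∘ₗ A i = 0) :
    IsNilpotent ((reindex R (fun _ ↦ M) σ).toLinearMap ∘ₗ map A) := by
  classical
  refine ⟨2, ?_⟩
  rw [sq, Module.End.mul_eq_comp, LinearMap.comp_assoc, ← LinearMap.comp_assoc (map A),
    map_comp_reindex_self, LinearMap.comp_assoc, ← map_comp,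
    map_eq_zero_of_apply_eq_zero (i := i) h, LinearMap.comp_zero, LinearMap.comp_zero]

theorem trace_reindex_comp_map_eq_zero [IsReduced R] {A : ι → M →ₗ[R] M} {σ : Equiv.Perm ι}
    {i : ι} (h : A (σ i) ∘ₗ A i = 0) :
    LinearMap.trace R _ ((reindex R (fun _ ↦ M) σ).toLinearMap ∘ₗ map A) = 0 :=
  (LinearMap.isNilpotent_trace_of_isNilpotent (isNilpotent_reindex_comp_map h)).eq_zero

theorem map_sum_eq_sum_map [Fintype ι] [DecidableEq ι] {s t : ι → Type*}
    [∀ i, AddCommGroup (s i)] [∀ i, Module R (s i)] [∀ i, AddCommGroup (t i)]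
    [∀ i, Module R (t i)] {κ : Type*} [Fintype κ] (Q : ∀ i, κ → s i →ₗ[R] t i) :
    map (fun i ↦ ∑ c, Q i c) = ∑ f : ι → κ, map (fun i ↦ Q i (f i)) :=
  (mapMultilinear R s t).map_sum Q

end PiTensorProduct

theorem Equiv.Perm.exists_apply_ne_of_ne {ι α : Type*} {σ : Equiv.Perm ι}
    (hσ : ∀ i j, ∃ k : ℕ, (σ ^ k) i = j) {f : ι → α} {i j : ι} (hij : f i ≠ f j) :
    ∃ l, f (σ l) ≠ f l := by
  by_contra! hf
  have hpow : ∀ k : ℕ, f ((σ ^ k) i) = f i := by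
    intro k
    induction k with
    | zero => rfl
    | succ k ih => rw [pow_succ', Equiv.Perm.mul_apply, hf, ih]
  obtain ⟨k, rfl⟩ := hσ i j
  exact hij (hpow k).symm

open PiTensorProduct in
theorem LinearMap.trace_reindex_comp_map_sum_of_orthogonal {R : Type*} [CommRing R] [IsReduced R]
    {M : Type*} [AddCommGroup M] [Module R M] {ι : Type*} [Fintype ι] [DecidableEq ι]
    [Nonempty ι] {κ : Type*} [Fintype κ] (Q : κ → M →ₗ[R] M)
    (hQ : ∀ a b, a ≠ b → Q a ∘ₗ Q b = 0) (σ : Equiv.Perm ι)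
    (hσ : ∀ i j, ∃ k : ℕ, (σ ^ k) i = j) :
    trace R _ ((reindex R (fun _ ↦ M) σ).toLinearMap ∘ₗ map (fun _ ↦ ∑ c, Q c)) =
      ∑ c, trace R _ ((reindex R (fun _ ↦ M) σ).toLinearMap ∘ₗ map (fun _ ↦ Q c)) := by
  let const : κ ↪ (ι → κ) := ⟨Function.const ι, Function.const_injective⟩
  rw [map_sum_eq_sum_map (fun _ ↦ Q), ← Module.End.mul_eq_comp, Finset.mul_sum, map_sum]
  refine (Finset.sum_subset (Finset.subset_univ (Finset.univ.map const)) fun f _ hf ↦ ?_).symm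
    |>.trans (Finset.sum_map _ _ _)
  obtain ⟨i₀⟩ := ‹Nonempty ι›
  obtain ⟨j, hj⟩ : ∃ j, f i₀ ≠ f j := by
    by_contra! hconst
    exact hf (Finset.mem_map.2 ⟨f i₀, Finset.mem_univ _, funext hconst⟩)
  obtain ⟨l, hl⟩ := Equiv.Perm.exists_apply_ne_of_ne hσ hj
  exact trace_reindex_comp_map_eq_zero (hQ _ _ hl)

theorem stmt11_general (K : Type*) [Field K] (V : Type*) [AddCommGroup V] [Module K V]
    (P : Fin 2 → (V →ₗ[K] V))
    (hsum : P 0 + P 1 = LinearMap.id)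
    (h01 : P 0 ∘ₗ P 1 = 0) (h10 : P 1 ∘ₗ P 0 = 0)
    (T : V →ₗ[K] V) (hT : T ∘ₗ P 0 = P 0 ∘ₗ T)
    (n : ℕ) (hn : 1 ≤ n) (σ : Equiv.Perm (Fin n))
    (hσ : ∀ i j : Fin n, ∃ k : ℕ, (σ ^ k) i = j) :
    LinearMap.trace K (⨂[K] _ : Fin n, V) (permMap K V n σ ∘ₗ tpowMap K V n T) =
      LinearMap.trace K (⨂[K] _ : Fin n, V) (permMap K V n σ ∘ₗ tpowMap K V n (T ∘ₗ P 0)) +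
        LinearMap.trace K (⨂[K] _ : Fin n, V) (permMap K V n σ ∘ₗ tpowMap K V n (T ∘ₗ P 1)) := by
  have hT1 : T ∘ₗ P 1 = P 1 ∘ₗ T := by
    rw [eq_sub_of_add_eq' hsum, LinearMap.comp_sub, LinearMap.sub_comp, hT]
    rfl
  have horth : ∀ a b : Fin 2, a ≠ b → (T ∘ₗ P a) ∘ₗ (T ∘ₗ P b) = 0 := by
    intro a b hne
    have hTa : T ∘ₗ P a = P a ∘ₗ T := by fin_cases a <;> assumption
    have hPab : P a ∘ₗ P b = 0 := by fin_cases a <;> fin_cases b <;> trivial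
    calc (T ∘ₗ P a) ∘ₗ (T ∘ₗ P b) = T ∘ₗ (P a ∘ₗ T) ∘ₗ P b := rfl
      _ = T ∘ₗ T ∘ₗ (P a ∘ₗ P b) := by rw [← hTa]; rfl
      _ = 0 := by rw [hPab, LinearMap.comp_zero, LinearMap.comp_zero]
  have : Nonempty (Fin n) := ⟨⟨0, hn⟩⟩
  have key := LinearMap.trace_reindex_comp_map_sum_of_orthogonal (fun c ↦ T ∘ₗ P c) horth σ hσ
  rw [Fin.sum_univ_two, Fin.sum_univ_two, ← LinearMap.comp_add, hsum, LinearMap.comp_id] at key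
  exact key

/-- for complementary projections `P 0, P 1` of `V`, an endomorphism `T`
commuting with `P 0` and an `n`-cycle `σ` (`n ≥ 1`),
`Tr(L_σ^{(n)} ∘ T^{⊗n}) = Tr(L_σ^{(n)} ∘ (T∘P 0)^{⊗n}) + Tr(L_σ^{(n)} ∘ (T∘P 1)^{⊗n})`. -/
theorem stmt11 (K : Type*) [Field K] (V : Type*) [AddCommGroup V] [Module K V]
    [FiniteDimensional K V] (P : Fin 2 → (V →ₗ[K] V))
    (hsum : P 0 + P 1 = LinearMap.id)
    (h01 : P 0 ∘ₗ P 1 = 0) (h10 : P 1 ∘ₗ P 0 = 0)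
    (hP0 : P 0 ∘ₗ P 0 = P 0) (hP1 : P 1 ∘ₗ P 1 = P 1)
    (T : V →ₗ[K] V) (hT : T ∘ₗ P 0 = P 0 ∘ₗ T)
    (n : ℕ) (hn : 1 ≤ n) (σ : Equiv.Perm (Fin n))
    (hσ : ∀ i j : Fin n, ∃ k : ℕ, (σ ^ k) i = j) :
    LinearMap.trace K (⨂[K] _ : Fin n, V) (permMap K V n σ ∘ₗ tpowMap K V n T) =
      LinearMap.trace K (⨂[K] _ : Fin n, V) (permMap K V n σ ∘ₗ tpowMap K V n (T ∘ₗ P 0)) +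
        LinearMap.trace K (⨂[K] _ : Fin n, V) (permMap K V n σ ∘ₗ tpowMap K V n (T ∘ₗ P 1)) :=
  stmt11_general K V P hsum h01 h10 T hT n hn σ hσ
end

section
/- Let K be a field, let V₁ and V₂ be finite-dimensional K-vector spaces, let T₁ ∈ End_K(V₁) and T₂ ∈ End_K(V₂), let n be a natural number and σ ∈ S_n. Then Tr(L_σ^{(n)} ∘ (T₁ ⊗ T₂)^{⊗n}) = Tr(L_σ^{(n)} ∘ T₁^{⊗n}) · Tr(L_σ^{(n)} ∘ T₂^{⊗n}), where on the left side L_σ^{(n)} and (T₁⊗T₂)^{⊗n} are endomorphisms of (V₁ ⊗ V₂)^{⊗n} and T₁ ⊗ T₂ denotes the induced endomorphism of V₁ ⊗ V₂. -/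
/-!
The isomorphism `ψ : ⨂ⁿ (V₁ ⊗ V₂) ≃ (⨂ⁿ V₁) ⊗ (⨂ⁿ V₂)`, `⨂ᵢ (vᵢ ⊗ wᵢ) ↦ (⨂ᵢ vᵢ) ⊗ (⨂ᵢ wᵢ)`,
conjugates `L_σ` to `L_σ ⊗ L_σ` and `(T₁ ⊗ T₂)^{⊗n}` to `T₁^{⊗n} ⊗ T₂^{⊗n}`. The trace is
invariant under conjugation and multiplicative on tensor products of endomorphisms.
-/

open scoped TensorProduct

namespace PiTensorProduct

variable (R : Type*) [CommSemiring R] (M N : Type*) [AddCommMonoid M] [Module R M]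
  [AddCommMonoid N] [Module R N]

noncomputable def succEquiv (n : ℕ) :
    (⨂[R] _ : Fin (n + 1), M) ≃ₗ[R] M ⊗[R] (⨂[R] _ : Fin n, M) :=
  (reindex R (fun _ ↦ M) ((finCongr (Nat.add_comm n 1)).trans finSumFinEquiv.symm)).trans <|
    (tmulEquiv R M).symm.trans <|
      TensorProduct.congr (subsingletonEquiv 0) (LinearEquiv.refl R _)

noncomputable def tensorDistribEquiv : (n : ℕ) →
    (⨂[R] _ : Fin n, M ⊗[R] N) ≃ₗ[R] (⨂[R] _ : Fin n, M) ⊗[R] (⨂[R] _ : Fin n, N)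
  | 0 => (isEmptyEquiv (Fin 0)).trans <| (TensorProduct.lid R R).symm.trans <|
      TensorProduct.congr (isEmptyEquiv (Fin 0)).symm (isEmptyEquiv (Fin 0)).symm
  | n + 1 => (succEquiv R (M ⊗[R] N) n).trans <|
      (TensorProduct.congr (LinearEquiv.refl R _) (tensorDistribEquiv n)).trans <|
      (TensorProduct.tensorTensorTensorComm R M N _ _).trans <|
      TensorProduct.congr (succEquiv R M n).symm (succEquiv R N n).symm

variable {R M N}

@[simp]
theorem succEquiv_tprod {n : ℕ} (f : Fin (n + 1) → M) :
    succEquiv R M n (tprod R f) = f 0 ⊗ₜ tprod R fun i ↦ f i.succ := by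
  simp [succEquiv]
  rfl

@[simp]
theorem succEquiv_symm_tmul {n : ℕ} (m : M) (f : Fin n → M) :
    (succEquiv R M n).symm (m ⊗ₜ tprod R f) = tprod R (Fin.cons m f) :=
  (LinearEquiv.symm_apply_eq _).mpr (by simp)

@[simp]
theorem tensorDistribEquiv_tprod {n : ℕ} (v : Fin n → M) (w : Fin n → N) :
    tensorDistribEquiv R M N n (tprod R fun i ↦ v i ⊗ₜ w i) = tprod R v ⊗ₜ tprod R w := by
  induction n with
  | zero =>
    simp [tensorDistribEquiv, Subsingleton.elim v isEmptyElim, Subsingleton.elim w isEmptyElim]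
  | succ n ih => simp [tensorDistribEquiv, ih, ← Fin.tail_def]

theorem tensorDistribEquiv_symm_tprod_tmul {n : ℕ} (v : Fin n → M) (w : Fin n → N) :
    (tensorDistribEquiv R M N n).symm (tprod R v ⊗ₜ tprod R w) = tprod R fun i ↦ v i ⊗ₜ w i :=
  (LinearEquiv.symm_apply_eq _).mpr (tensorDistribEquiv_tprod v w).symm

end PiTensorProduct

open PiTensorProduct

section

variable {K : Type*} [Field K] {V₁ V₂ : Type*} [AddCommGroup V₁] [Module K V₁]
  [AddCommGroup V₂] [Module K V₂] {n : ℕ}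

theorem tensorDistribEquiv_conj_permMap (σ : Equiv.Perm (Fin n)) :
    (tensorDistribEquiv K V₁ V₂ n).conj (permMap K (V₁ ⊗[K] V₂) n σ) =
      TensorProduct.map (permMap K V₁ n σ) (permMap K V₂ n σ) := by
  ext v w
  simp [LinearEquiv.conj_apply, permMap, tensorDistribEquiv_symm_tprod_tmul]

theorem tensorDistribEquiv_conj_tpowMap_map (T₁ : V₁ →ₗ[K] V₁) (T₂ : V₂ →ₗ[K] V₂) :
    (tensorDistribEquiv K V₁ V₂ n).conj (tpowMap K (V₁ ⊗[K] V₂) n (TensorProduct.map T₁ T₂)) =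
      TensorProduct.map (tpowMap K V₁ n T₁) (tpowMap K V₂ n T₂) := by
  ext v w
  simp [LinearEquiv.conj_apply, tpowMap, tensorDistribEquiv_symm_tprod_tmul]

end

/-- `Tr(L_σ^{(n)} ∘ (T₁ ⊗ T₂)^{⊗n}) = Tr(L_σ^{(n)} ∘ T₁^{⊗n}) · Tr(L_σ^{(n)} ∘ T₂^{⊗n})`. -/
theorem stmt12 (K : Type*) [Field K] (V₁ V₂ : Type*) [AddCommGroup V₁] [Module K V₁]
    [AddCommGroup V₂] [Module K V₂] [FiniteDimensional K V₁] [FiniteDimensional K V₂]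
    (T₁ : V₁ →ₗ[K] V₁) (T₂ : V₂ →ₗ[K] V₂) (n : ℕ) (σ : Equiv.Perm (Fin n)) :
    LinearMap.trace K (⨂[K] _ : Fin n, V₁ ⊗[K] V₂)
        (permMap K (V₁ ⊗[K] V₂) n σ ∘ₗ tpowMap K (V₁ ⊗[K] V₂) n (TensorProduct.map T₁ T₂)) =
      LinearMap.trace K (⨂[K] _ : Fin n, V₁) (permMap K V₁ n σ ∘ₗ tpowMap K V₁ n T₁) *
        LinearMap.trace K (⨂[K] _ : Fin n, V₂) (permMap K V₂ n σ ∘ₗ tpowMap K V₂ n T₂) := by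
  rw [← LinearMap.trace_conj' _ (tensorDistribEquiv K V₁ V₂ n), LinearEquiv.conj_comp,
    tensorDistribEquiv_conj_permMap, tensorDistribEquiv_conj_tpowMap_map,
    ← TensorProduct.map_comp, LinearMap.trace_tensorProduct']
end

section
/- Let K be an algebraically closed field of characteristic zero, G a finite group, and H a subgroup of G. Let V be a simple finite-dimensional K[H]-module, and let e ∈ K[H] be an element that is central in K[H], satisfies e² = e, acts as the identity on V, and acts as zero on every simple K[H]-module not isomorphic to V. Regard e as an element of K[G] via the inclusion K[H] ⊆ K[G], and set Z := (1/(|G| · dim_K V)) Σ_{x ∈ G} x e x⁻¹ ∈ K[G]. Then Z is central in K[G], and for every simple finite-dimensional K[G]-module W, Z acts on W as scalar multiplication by dim_K Hom_{K[H]}(V, Res_H W) / dim_K W, where Res_H W is W viewed as a K[H]-module via the inclusion K[H] ⊆ K[G]. -/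
/-!
Schur's lemma makes the central element `Z` act on a simple `W` by a scalar `c`, so that
`c · dim W = tr_W Z`. Conjugation does not change traces, hence `tr_W Z = tr_W e / dim V`.
As `e` is idempotent, `tr_W e = dim eW`, and by Maschke's theorem `eW` is the `V`-isotypic
component of `Res_H W`, of dimension `dim V · dim Hom_H(V, W)`.
-/

universe u

/-- The inclusion `K[H] → K[G]` of group algebras induced by the inclusion of a subgroup
`H ≤ G`. -/
noncomputable def groupAlgebraInclusion (K : Type u) [Field K] (G : Type u) [Group G]
    (H : Subgroup G) : MonoidAlgebra K ↥H →+* MonoidAlgebra K G :=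
  (MonoidAlgebra.mapDomainAlgHom K K H.subtype).toRingHom

/-- The element `Z = (1/(|G|·dim V)) Σ_{x ∈ G} x e x⁻¹` of `K[G]`, where `e ∈ K[H]` is
regarded as an element of `K[G]` and `dV` stands for `dim_K V`. -/
noncomputable def averagedIdempotent (K : Type u) [Field K] (G : Type u) [Group G] [Fintype G]
    (H : Subgroup G) (e : MonoidAlgebra K ↥H) (dV : ℕ) : MonoidAlgebra K G :=
  ((Fintype.card G : K) * (dV : K))⁻¹ •
    ∑ x : G, MonoidAlgebra.single x (1 : K) * groupAlgebraInclusion K G H e *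
      MonoidAlgebra.single x⁻¹ (1 : K)

open Module MonoidAlgebra

def Module.End.smulOfCommute {A : Type*} (M : Type*) [Ring A] [AddCommGroup M] [Module A M]
    (a : A) (ha : ∀ b : A, a * b = b * a) : Module.End A M where
  toFun := (a • ·)
  map_add' := smul_add a
  map_smul' b m := by simp only [smul_smul, ha b, RingHom.id_apply]

section Schur

variable (K : Type*) {A V : Type*} [Field K] [IsAlgClosed K] [Ring A] [Algebra K A]
  [AddCommGroup V] [Module K V] [Module A V] [IsScalarTower K A V]
  [FiniteDimensional K V] [IsSimpleModule A V]

noncomputable def IsSimpleModule.endLinearEquivOfIsAlgClosed : K ≃ₗ[K] Module.End A V :=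
  .ofBijective (Algebra.linearMap K (Module.End A V))
    (IsSimpleModule.algebraMap_end_bijective_of_isAlgClosed K)

theorem IsSimpleModule.exists_smul_eq_of_commute {a : A} (ha : ∀ b : A, a * b = b * a) :
    ∃ c : K, ∀ v : V, a • v = c • v := by
  obtain ⟨c, hc⟩ := (endLinearEquivOfIsAlgClosed K (A := A) (V := V)).surjective
    (Module.End.smulOfCommute V a ha)
  exact ⟨c, fun v => (LinearMap.congr_fun hc v).symm⟩

end Schur

section HomSpaces

variable (K : Type*) {A M N : Type*} [Field K] [Ring A] [Algebra K A]
  [AddCommGroup M] [Module A M] [AddCommGroup N] [Module K N] [Module A N]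
  [IsScalarTower K A N]

def LinearMap.piEquivₗ (ι : Type*) : (M →ₗ[A] (ι → N)) ≃ₗ[K] (ι → M →ₗ[A] N) where
  toFun f i := LinearMap.proj i ∘ₗ f
  invFun := LinearMap.pi
  map_add' _ _ := rfl
  map_smul' _ _ := rfl
  left_inv _ := rfl
  right_inv _ := rfl

def LinearEquiv.congrRightₗ {N' : Type*} [AddCommGroup N'] [Module K N'] [Module A N']
    [IsScalarTower K A N'] (g : N ≃ₗ[A] N') : (M →ₗ[A] N) ≃ₗ[K] (M →ₗ[A] N') :=
  .ofLinearMap (LinearMap.compRight K g.toLinearMap) (LinearMap.compRight K g.symm.toLinearMap)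
    (by ext; simp) (by ext; simp)

noncomputable def Submodule.linearMapEquivOfForallMem (P : Submodule A N)
    (hP : ∀ (f : M →ₗ[A] N) (m : M), f m ∈ P) : (M →ₗ[A] P) ≃ₗ[K] (M →ₗ[A] N) :=
  .ofBijective (LinearMap.compRight K P.subtype)
    ⟨fun _ _ h => LinearMap.ext fun m => Subtype.ext (LinearMap.congr_fun h m),
      fun f => ⟨f.codRestrict P (hP f), rfl⟩⟩

end HomSpaces

theorem IsIsotypicOfType.finrank_eq_mul {K A M V : Type*} [Field K] [IsAlgClosed K] [Ring A]
    [Algebra K A] [AddCommGroup V] [Module K V] [Module A V] [IsScalarTower K A V]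
    [FiniteDimensional K V] [IsSimpleModule A V]
    [AddCommGroup M] [Module K M] [Module A M] [IsScalarTower K A M] [FiniteDimensional K M]
    [IsSemisimpleModule A M] (h : IsIsotypicOfType A M V) :
    finrank K M = finrank K V * finrank K (V →ₗ[A] M) := by
  have : Module.Finite A M := .of_restrictScalars_finite K A M
  obtain ⟨n, ⟨g⟩⟩ := h.linearEquiv_fun
  rw [(g.restrictScalars K).finrank_eq, (LinearEquiv.congrRightₗ K g).finrank_eq,
    (LinearMap.piEquivₗ K (Fin n)).finrank_eq, ← (LinearEquiv.piCongrRight fun _ =>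
      IsSimpleModule.endLinearEquivOfIsAlgClosed K (A := A) (V := V)).finrank_eq,
    finrank_fin_fun, finrank_pi_fintype, Finset.sum_const, Finset.card_univ, Fintype.card_fin,
    smul_eq_mul, mul_comm]

section CentralIdempotent

universe v

variable {A V : Type*} [Ring A] [AddCommGroup V] [Module A V] {e : A}

theorem isIsotypicOfType_of_forall_smul_eq_self
    (hzero : ∀ (U : Type v) [AddCommGroup U] [Module A U],
      IsSimpleModule A U → ¬Nonempty (U ≃ₗ[A] V) → ∀ u : U, e • u = 0)
    {M : Type v} [AddCommGroup M] [Module A M] (hM : ∀ m : M, e • m = m) :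
    IsIsotypicOfType A M V := by
  intro S hS
  by_contra hSV
  have : Nontrivial S := IsSimpleModule.nontrivial A S
  obtain ⟨s, hs⟩ := exists_ne (0 : S)
  exact hs <| (Subtype.ext (hM s)).symm.trans (hzero S hS hSV s)

theorem trace_lsmul_eq_finrank_mul_finrank_linearMap {K : Type*} [Field K] [IsAlgClosed K]
    [Algebra K A] [Module K V] [IsScalarTower K A V] [FiniteDimensional K V] [IsSimpleModule A V]
    (hcentral : ∀ b : A, e * b = b * e) (hidem : IsIdempotentElem e) (hV : ∀ v : V, e • v = v)
    (hzero : ∀ (U : Type v) [AddCommGroup U] [Module A U],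
      IsSimpleModule A U → ¬Nonempty (U ≃ₗ[A] V) → ∀ u : U, e • u = 0)
    (M : Type v) [AddCommGroup M] [Module K M] [Module A M] [IsScalarTower K A M]
    [FiniteDimensional K M] [IsSemisimpleModule A M] :
    LinearMap.trace K M (Algebra.lsmul K K M e) = finrank K V * finrank K (V →ₗ[A] M) := by
  set ψ := Module.End.smulOfCommute M e hcentral
  have hrange : LinearMap.range (Algebra.lsmul K K M e) = (LinearMap.range ψ).restrictScalars K :=
    LinearMap.range_restrictScalars ψ
  have : FiniteDimensional K (LinearMap.range ψ) :=
    inferInstanceAs (FiniteDimensional K ((LinearMap.range ψ).restrictScalars K))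
  have hfix : ∀ m : LinearMap.range ψ, e • m = m := by
    rintro ⟨_, m, rfl⟩
    exact Subtype.ext (show e • e • m = e • m by rw [← mul_smul, hidem.eq])
  have hmem : ∀ (f : V →ₗ[A] M) (v : V), f v ∈ LinearMap.range ψ := fun f v =>
    ⟨f v, show e • f v = f v by rw [← f.map_smul, hV v]⟩
  rw [(LinearMap.IsIdempotentElem.isProj_range _ (hidem.map (Algebra.lsmul K K M))).trace, hrange,
    ← (Submodule.linearMapEquivOfForallMem K _ hmem).finrank_eq,
    ← Nat.cast_mul, ← (isIsotypicOfType_of_forall_smul_eq_self hzero hfix).finrank_eq_mul]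
  rfl

end CentralIdempotent

section Averaging

variable {k G : Type*} [CommSemiring k] [Group G] [Fintype G]

theorem MonoidAlgebra.sum_conj_mul_comm (a y : MonoidAlgebra k G) :
    (∑ x : G, single x (1 : k) * a * single x⁻¹ 1) * y =
      y * ∑ x : G, single x (1 : k) * a * single x⁻¹ 1 := by
  set S := ∑ x : G, single x (1 : k) * a * single x⁻¹ 1
  have hS : ∀ g : G, S * single g 1 = single g 1 * S := fun g => by
    simp only [S, Finset.mul_sum, Finset.sum_mul]
    refine Fintype.sum_equiv (Equiv.mulLeft g⁻¹) _ _ fun x => ?_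
    simp only [Equiv.coe_mulLeft, mul_inv_rev, inv_inv]
    rw [mul_assoc _ (single x⁻¹ 1), single_mul_single, ← mul_assoc, ← mul_assoc, single_mul_single,
      mul_inv_cancel_left, mul_one]
  induction y using MonoidAlgebra.induction_linear with
  | zero => rw [mul_zero, zero_mul]
  | add y z hy hz => rw [mul_add, add_mul, hy, hz]
  | single g r =>
    have hsingle : single g r = single g (1 : k) * single 1 r := by
      rw [single_mul_single, mul_one, one_mul]
    rw [hsingle, ← mul_assoc, hS, mul_assoc, ← single_one_comm, mul_assoc]

end Averaging

theorem LinearMap.trace_lsmul_mul_mul_of_mul_eq_one {K B W : Type*} [CommRing K] [Ring B]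
    [Algebra K B] [AddCommGroup W] [Module K W] [Module B W] [IsScalarTower K B W]
    {u v : B} (huv : v * u = 1) (a : B) :
    trace K W (Algebra.lsmul K K W (u * a * v)) = trace K W (Algebra.lsmul K K W a) := by
  rw [map_mul, trace_mul_comm, ← map_mul, ← mul_assoc, huv, one_mul]

section GroupAlgebra

variable {K : Type u} [Field K] {G : Type u} [Group G] [Fintype G] {H : Subgroup G}

theorem averagedIdempotent_mul_comm (e : MonoidAlgebra K H) (d : ℕ) (y : MonoidAlgebra K G) :
    averagedIdempotent K G H e d * y = y * averagedIdempotent K G H e d := by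
  rw [averagedIdempotent, smul_mul_assoc, mul_smul_comm, sum_conj_mul_comm]

theorem trace_lsmul_averagedIdempotent [CharZero K] (e : MonoidAlgebra K H) (d : ℕ)
    (W : Type*) [AddCommGroup W] [Module K W] [Module (MonoidAlgebra K G) W]
    [IsScalarTower K (MonoidAlgebra K G) W] :
    LinearMap.trace K W (Algebra.lsmul K K W (averagedIdempotent K G H e d)) =
      (d : K)⁻¹ * LinearMap.trace K W (Algebra.lsmul K K W (groupAlgebraInclusion K G H e)) := by
  have hinv (x : G) : single x⁻¹ (1 : K) * single x 1 = 1 := by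
    rw [single_mul_single, inv_mul_cancel, mul_one]; rfl
  have hconj (x : G) := LinearMap.trace_lsmul_mul_mul_of_mul_eq_one (K := K) (W := W) (hinv x)
    (groupAlgebraInclusion K G H e)
  rw [averagedIdempotent, map_smul, map_smul, map_sum, map_sum,
    Finset.sum_congr rfl fun x _ => hconj x, Finset.sum_const, Finset.card_univ,
    nsmul_eq_mul, smul_eq_mul]
  field_simp

end GroupAlgebra

theorem trace_lsmul_groupAlgebraInclusion {K : Type u} [Field K] [IsAlgClosed K] [CharZero K]
    {G : Type u} [Group G] [Fintype G] {H : Subgroup G}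
    {V : Type*} [AddCommGroup V] [Module K V] [Module (MonoidAlgebra K H) V]
    [IsScalarTower K (MonoidAlgebra K H) V] [FiniteDimensional K V]
    [IsSimpleModule (MonoidAlgebra K H) V] {e : MonoidAlgebra K H}
    (hcentral : ∀ x : MonoidAlgebra K H, e * x = x * e) (hidem : e * e = e)
    (hV : ∀ v : V, e • v = v)
    (hzero : ∀ (U : Type u) [AddCommGroup U] [Module (MonoidAlgebra K H) U],
      IsSimpleModule (MonoidAlgebra K H) U → ¬Nonempty (U ≃ₗ[MonoidAlgebra K H] V) →
        ∀ u : U, e • u = 0)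
    (W : Type u) [AddCommGroup W] [Module K W] [Module (MonoidAlgebra K G) W]
    [IsScalarTower K (MonoidAlgebra K G) W] [FiniteDimensional K W] :
    LinearMap.trace K W (Algebra.lsmul K K W (groupAlgebraInclusion K G H e)) =
      finrank K V * finrank K (V →ₛₗ[groupAlgebraInclusion K G H] W) := by
  let ι := MonoidAlgebra.mapDomainAlgHom K K H.subtype
  -- `Res_H W`, semisimple by Maschke's theorem (the instance needs `CharZero K`)
  let _ : Module (MonoidAlgebra K H) W := Module.compHom W ι.toRingHom
  have : IsScalarTower K (MonoidAlgebra K H) W :=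
    ⟨fun c a w => show ι (c • a) • w = c • ι a • w by rw [map_smul, smul_assoc]⟩
  let restrict : (V →ₛₗ[groupAlgebraInclusion K G H] W) ≃ₗ[K] (V →ₗ[MonoidAlgebra K H] W) :=
    { toFun f := { f with map_smul' := f.map_smulₛₗ }
      invFun f := { f with map_smul' := f.map_smul }
      map_add' _ _ := rfl
      map_smul' _ _ := rfl
      left_inv _ := rfl
      right_inv _ := rfl }
  rw [restrict.finrank_eq]
  exact trace_lsmul_eq_finrank_mul_finrank_linearMap hcentral hidem hV hzero W

/-- with `e ∈ K[H]` the central idempotent of a simple `K[H]`-module `V`,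
the element `Z = (1/(|G|·dim V)) Σ_{x ∈ G} x e x⁻¹` is central in `K[G]`, and on every
simple finite-dimensional `K[G]`-module `W` it acts as scalar multiplication by
`dim_K Hom_{K[H]}(V, Res_H W) / dim_K W`. -/
theorem stmt14 (K : Type u) [Field K] [IsAlgClosed K] [CharZero K]
    (G : Type u) [Group G] [Fintype G] (H : Subgroup G)
    (V : Type u) [AddCommGroup V] [Module K V] [Module (MonoidAlgebra K ↥H) V]
    [IsScalarTower K (MonoidAlgebra K ↥H) V] [FiniteDimensional K V]
    [IsSimpleModule (MonoidAlgebra K ↥H) V]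
    (e : MonoidAlgebra K ↥H)
    (hcentral : ∀ x : MonoidAlgebra K ↥H, e * x = x * e)
    (hidem : e * e = e)
    (hV : ∀ v : V, e • v = v)
    (hzero : ∀ (U : Type u) [AddCommGroup U] [Module (MonoidAlgebra K ↥H) U],
      IsSimpleModule (MonoidAlgebra K ↥H) U → ¬Nonempty (U ≃ₗ[MonoidAlgebra K ↥H] V) →
        ∀ u : U, e • u = 0) :
    (∀ y : MonoidAlgebra K G,
        averagedIdempotent K G H e (Module.finrank K V) * y =
          y * averagedIdempotent K G H e (Module.finrank K V)) ∧
    (∀ (W : Type u) [AddCommGroup W] [Module K W] [Module (MonoidAlgebra K G) W]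
        [IsScalarTower K (MonoidAlgebra K G) W] [SMulCommClass (MonoidAlgebra K G) K W]
        [FiniteDimensional K W], IsSimpleModule (MonoidAlgebra K G) W →
      ∀ w : W, averagedIdempotent K G H e (Module.finrank K V) • w =
        ((Module.finrank K (V →ₛₗ[groupAlgebraInclusion K G H] W) : K) /
          (Module.finrank K W : K)) • w) := by
  refine ⟨averagedIdempotent_mul_comm e _, fun W _ _ _ _ _ _ _ w => ?_⟩
  obtain ⟨c, hc⟩ := IsSimpleModule.exists_smul_eq_of_commute K (V := W)
    (averagedIdempotent_mul_comm e (finrank K V))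
  have : Nontrivial V := IsSimpleModule.nontrivial (MonoidAlgebra K H) V
  have : Nontrivial W := IsSimpleModule.nontrivial (MonoidAlgebra K G) W
  have htrace :
      LinearMap.trace K W (Algebra.lsmul K K W (averagedIdempotent K G H e (finrank K V))) =
        c * finrank K W := by
    rw [show Algebra.lsmul K K W _ = c • LinearMap.id from LinearMap.ext hc, map_smul,
      LinearMap.trace_id, smul_eq_mul]
  rw [trace_lsmul_averagedIdempotent, trace_lsmul_groupAlgebraInclusion hcentral hidem hV hzero,
    inv_mul_cancel_left₀ (Nat.cast_ne_zero.mpr finrank_pos.ne')] at htrace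
  rw [hc, htrace, mul_div_cancel_right₀ _ (Nat.cast_ne_zero.mpr finrank_pos.ne')]
end

section
/- Let K be a field of characteristic zero and d ≥ 1. For each k with 1 ≤ k ≤ d, let t_k be the polynomial in the d² variables x_{ij} (1 ≤ i,j ≤ d) whose value at any matrix A ∈ M_d(K) is Tr(A^k). Then the polynomials t_1, t_2, …, t_d are algebraically independent over K. -/
/-!
Substituting the diagonal matrix `diag(x₁, …, x_d)` for the generic matrix sends `t_k` to the
power sum `p_k`, so it suffices that `p₁, …, p_d` are algebraically independent. By Newton's
identities, which divide by `k` and so need characteristic zero, the elementary symmetric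
polynomials `e₁, …, e_d` lie in `K[p₁, …, p_d]`. They are algebraically independent, so this
algebra has transcendence degree at least `d`; being generated by the `d` elements
`p₁, …, p_d`, it has them as a transcendence basis.
-/

/-- The generic `d × d` matrix whose entries are the variables `x_{ij}`. -/
noncomputable def genericMatrix (K : Type*) [Field K] (d : ℕ) :
    Matrix (Fin d) (Fin d) (MvPolynomial (Fin d × Fin d) K) :=
  Matrix.of fun i j => MvPolynomial.X (i, j)

open MvPolynomial Set

theorem AlgebraicIndependent.of_range_subset_adjoin {ι R A : Type*} [Finite ι] [CommRing R]
    [CommRing A] [Algebra R A] [NoZeroDivisors A] {x y : ι → A} (hx : AlgebraicIndependent R x)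
    (hxy : range x ⊆ Algebra.adjoin R (range y)) : AlgebraicIndependent R y := by
  nontriviality R
  let S := Algebra.adjoin R (range y)
  let y' : ι → S := fun i => ⟨y i, Algebra.subset_adjoin (mem_range_self i)⟩
  let x' : ι → S := fun i => ⟨x i, hxy (mem_range_self i)⟩
  have hx' : AlgebraicIndependent R x' := AlgebraicIndependent.of_comp S.val hx
  have : FaithfulSMul R S :=
    (faithfulSMul_iff_algebraMap_injective R S).mpr hx'.algebraMap_injective
  have : Nontrivial S := hx'.algebraMap_injective.nontrivial
  have hy'_top : Algebra.adjoin R (range y') = ⊤ := by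
    convert Algebra.adjoin_adjoin_coe_preimage (R := R) (s := range y)
    ext ⟨a, ha⟩
    simp [y', Subtype.ext_iff]
  have : Algebra.IsAlgebraic (Algebra.adjoin R (range y')) S :=
    ⟨fun s => isAlgebraic_algebraMap (R := Algebra.adjoin R (range y')) ⟨s, hy'_top ▸ trivial⟩⟩
  have hy' : IsTranscendenceBasis R y' :=
    Algebra.IsAlgebraic.isTranscendenceBasis_of_lift_le_trdeg_of_finite R y'
      hx'.lift_cardinalMk_le_trdeg
  exact hy'.1.map' (f := S.val) Subtype.val_injective

namespace MvPolynomial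

theorem esymm_algebraicIndependent {σ : Type*} (R : Type*) [Fintype σ] [CommRing R] {n : ℕ}
    (hn : n ≤ Fintype.card σ) : AlgebraicIndependent R (fun i : Fin n => esymm σ R (i + 1)) := by
  rw [algebraicIndependent_iff_injective_aeval]
  intro p q hpq
  apply esymmAlgHom_injective R hn
  rw [Subtype.ext_iff, esymmAlgHom_apply, esymmAlgHom_apply]
  exact hpq

theorem esymm_mem_adjoin_psum (σ K : Type*) [Fintype σ] [Field K] [CharZero K] (k : ℕ) :
    esymm σ K k ∈ Algebra.adjoin K (psum σ K '' Icc 1 k) := by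
  induction k using Nat.strong_induction_on with
  | _ k ih =>
  rcases Nat.eq_zero_or_pos k with rfl | hk
  · simp [one_mem]
  set S := Algebra.adjoin K (psum σ K '' Icc 1 k)
  have hnewton : (k : K) • esymm σ K k ∈ S := by
    rw [Algebra.smul_def, map_natCast, mul_esymm_eq_sum]
    refine mul_mem (pow_mem (neg_mem (one_mem S)) _) (sum_mem fun ⟨a, b⟩ hab => ?_)
    simp only [Finset.mem_filter, Finset.HasAntidiagonal.mem_antidiagonal] at hab
    refine mul_mem (mul_mem (pow_mem (neg_mem (one_mem S)) _) ?_) ?_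
    · exact Algebra.adjoin_mono (image_mono (Icc_subset_Icc_right (by omega))) (ih a hab.2)
    · exact Algebra.subset_adjoin ⟨b, ⟨by omega, by omega⟩, rfl⟩
  simpa [hk.ne'] using S.smul_mem hnewton (k : K)⁻¹

theorem psum_algebraicIndependent {σ : Type*} (K : Type*) [Fintype σ] [Field K] [CharZero K]
    {n : ℕ} (hn : n ≤ Fintype.card σ) :
    AlgebraicIndependent K (fun i : Fin n => psum σ K (i + 1)) := by
  refine (esymm_algebraicIndependent K hn).of_range_subset_adjoin ?_
  rintro _ ⟨i, rfl⟩
  refine Algebra.adjoin_mono ?_ (esymm_mem_adjoin_psum σ K (i + 1))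
  rintro _ ⟨b, ⟨hb1, hb⟩, rfl⟩
  exact ⟨⟨b - 1, by omega⟩, by simp only [Nat.sub_add_cancel hb1]⟩

theorem trace_diagonal_X_pow (σ R : Type*) [Fintype σ] [DecidableEq σ] [CommSemiring R] (k : ℕ) :
    Matrix.trace (Matrix.diagonal (X : σ → MvPolynomial σ R) ^ k) = psum σ R k := by
  simp [Matrix.diagonal_pow, psum]

end MvPolynomial

theorem aeval_trace_genericMatrix_pow {K B : Type*} [Field K] [CommRing B] [Algebra K B] {d : ℕ}
    (A : Matrix (Fin d) (Fin d) B) (k : ℕ) :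
    aeval (fun p => A p.1 p.2) (Matrix.trace (genericMatrix K d ^ k)) = Matrix.trace (A ^ k) := by
  rw [AddMonoidHom.map_trace, ← AlgHom.mapMatrix_apply, map_pow]
  congr
  ext i j
  simp [genericMatrix]

theorem stmt16_general (K : Type*) [Field K] [CharZero K] (d : ℕ) :
    AlgebraicIndependent K
      (fun k : Fin d => Matrix.trace (genericMatrix K d ^ ((k : ℕ) + 1))) := by
  refine .of_comp (aeval fun p : Fin d × Fin d => Matrix.diagonal (X (R := K)) p.1 p.2) ?_
  convert psum_algebraicIndependent K (σ := Fin d) (Fintype.card_fin d).ge using 2 with k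
  exact (aeval_trace_genericMatrix_pow _ _).trans (trace_diagonal_X_pow _ _ _)

/-- over a field of characteristic zero, the trace polynomials
`t_k = Tr(X^k)` for `1 ≤ k ≤ d` of a generic `d × d` matrix `X` are algebraically
independent over `K`. -/
theorem stmt16 (K : Type*) [Field K] [CharZero K] (d : ℕ) (hd : 1 ≤ d) :
    AlgebraicIndependent K
      (fun k : Fin d => Matrix.trace (genericMatrix K d ^ ((k : ℕ) + 1))) :=
  stmt16_general K d
end
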